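/- arXiv:2006.16023 — 4 statements merged into one kernel-verified Lean document; each statement's English description precedes it below -/
import Mathlib

section
/- The 4×4 real matrix 𝒜 with rows (1, 1, 1, 0), (π/(2T), −π/(2T), 0, π/(2T)), ((π/(2T))e^{π/2}, −(π/(2T))e^{−π/2}, −π/(2T), 0), ((π/(2T))² e^{π/2}, (π/(2T))² e^{−π/2}, 0, −(π/(2T))²) is invertible for every real T > 0. -/
open Real

/-- The matrix `𝒜` with `a = π/(2T)`, `E = e^{π/2}` and `F = e^{-π/2}`. -/
def bcMatrix {R : Type*} [CommRing R] (a E F : R) : Matrix (Fin 4) (Fin 4) R :=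
  !![1, 1, 1, 0;
    a, -a, 0, a;
    a * E, -(a * F), -a, 0;
    a ^ 2 * E, a ^ 2 * F, 0, -(a ^ 2)]

theorem bcMatrix_det {R : Type*} [CommRing R] (a E F : R) :
    (bcMatrix a E F).det = 2 * a ^ 4 * (E + 1) * (F - 1) := by
  simp only [bcMatrix, Matrix.det_succ_row_zero, Fin.sum_univ_succ, Matrix.det_unique,
    Matrix.submatrix_apply, Matrix.of_apply, Matrix.cons_val, Fin.succAbove, Fin.default_eq_zero,
    Fin.reduceSucc, Fin.reduceCastSucc, Fin.reduceLT, Fin.coe_ofNat_eq_mod, ↓reduceIte]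
  ring

theorem bcMatrix_isUnit {K : Type*} [Field K] [NeZero (2 : K)] {a E F : K}
    (ha : a ≠ 0) (hE : E ≠ -1) (hF : F ≠ 1) : IsUnit (bcMatrix a E F) := by
  rw [Matrix.isUnit_iff_isUnit_det, bcMatrix_det, isUnit_iff_ne_zero]
  have hE' : E + 1 ≠ 0 := fun h => hE (eq_neg_of_add_eq_zero_left h)
  have hF' : F - 1 ≠ 0 := sub_ne_zero.mpr hF
  exact mul_ne_zero (mul_ne_zero (mul_ne_zero two_ne_zero (pow_ne_zero 4 ha)) hE') hF'

/-- The 4×4 boundary-condition matrix 𝒜 of the paper is invertible for every `T > 0`. -/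
theorem matrixA_isUnit (T : ℝ) (hT : 0 < T) :
    IsUnit (!![(1:ℝ), 1, 1, 0;
      π/(2*T), -(π/(2*T)), 0, π/(2*T);
      (π/(2*T)) * Real.exp (π/2), -((π/(2*T)) * Real.exp (-(π/2))), -(π/(2*T)), 0;
      (π/(2*T))^2 * Real.exp (π/2), (π/(2*T))^2 * Real.exp (-(π/2)), 0, -((π/(2*T))^2)]) := by
  have ha : π / (2 * T) ≠ 0 := by positivity
  have hE : Real.exp (π / 2) ≠ -1 := by linarith [Real.exp_pos (π / 2)]
  have hF : Real.exp (-(π / 2)) ≠ 1 := (Real.exp_lt_one_iff.mpr (by linarith [pi_pos])).ne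
  exact bcMatrix_isUnit ha hE hF
end

section
/- For T > 0 and ω = π/(2T), the only solution of h'''' = ω⁴ h on [0,T] satisfying h(0) = 0, h'(0) = 0, h'(T) = 0 and h''(T) = 0 is the zero function. -/
/-!
Subtracting from `h` the solution `g` of `g'''' = ω⁴ g` with `g(0) = g'(0) = 0` and the same
`g''(0)`, `g'''(0)` leaves a solution `w` with zero Cauchy data at `0`; it vanishes on `[0, T]`
because its energy `∑_{n<4} (w⁽ⁿ⁾)²` obeys a Grönwall inequality. Hence `h = g`, and the two
conditions at `T` become a linear system for the coefficients of `g` with determinant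
`2 ω³ sinh(ωT) sin(ωT)`, which is nonzero for `ωT = π/2`.
-/

open Real Set

theorem iteratedDeriv_eq_zero_of_fourth_order_ivp {w : ℝ → ℝ} {K a b : ℝ} (hw : ContDiff ℝ 4 w)
    (hode : ∀ t ∈ Icc a b, iteratedDeriv 4 w t = K * w t)
    (hinit : ∀ n < 4, iteratedDeriv n w a = 0) :
    ∀ t ∈ Icc a b, ∀ n < 4, iteratedDeriv n w t = 0 := by
  set E : ℝ → ℝ := fun t => ∑ n ∈ Finset.range 4, iteratedDeriv n w t ^ 2
  have hderiv : ∀ n < 4, ∀ t, HasDerivAt (iteratedDeriv n w) (iteratedDeriv (n + 1) w t) t := by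
    intro n hn t
    rw [iteratedDeriv_succ]
    exact ((hw.differentiable_iteratedDeriv n (by exact_mod_cast hn)) t).hasDerivAt
  have hE : ∀ t, HasDerivAt E
      (∑ n ∈ Finset.range 4, 2 * iteratedDeriv n w t * iteratedDeriv (n + 1) w t) t := fun t =>
    (HasDerivAt.fun_sum fun n hn => (hderiv n (Finset.mem_range.mp hn) t).pow 2).congr_deriv
      (Finset.sum_congr rfl fun n _ => by ring)
  -- `2xy ≤ x² + y²` and `2Kxy ≤ K²x² + y²`
  have hbound : ∀ t ∈ Ico a b, ‖∑ n ∈ Finset.range 4, 2 * iteratedDeriv n w t *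
      iteratedDeriv (n + 1) w t‖ ≤ (2 + K ^ 2) * ‖E t‖ := by
    intro t ht
    have hE_nonneg : 0 ≤ E t := Finset.sum_nonneg fun n _ => sq_nonneg _
    rw [Real.norm_of_nonneg hE_nonneg, Real.norm_eq_abs, abs_le]
    simp only [E, Finset.sum_range_succ, Finset.sum_range_zero, zero_add, Nat.reduceAdd,
      hode t (Ico_subset_Icc_self ht), iteratedDeriv_zero]
    generalize w t = x₀, iteratedDeriv 1 w t = x₁, iteratedDeriv 2 w t = x₂,
      iteratedDeriv 3 w t = x₃
    constructor <;> nlinarith [sq_nonneg (x₀ - x₁), sq_nonneg (x₁ - x₂), sq_nonneg (x₂ - x₃),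
      sq_nonneg (K * x₀ - x₃), sq_nonneg (x₀ + x₁), sq_nonneg (x₁ + x₂), sq_nonneg (x₂ + x₃),
      sq_nonneg (K * x₀ + x₃)]
  have hE_zero := eq_zero_of_abs_deriv_le_mul_abs_self_of_eq_zero_right
    (fun t _ => (hE t).continuousAt.continuousWithinAt) (fun t _ => (hE t).hasDerivWithinAt)
    (Finset.sum_eq_zero fun n hn => by rw [hinit n (Finset.mem_range.mp hn)]; norm_num) hbound
  intro t ht n hn
  exact pow_eq_zero_iff two_ne_zero |>.mp <|
    (Finset.sum_eq_zero_iff_of_nonneg fun n _ => sq_nonneg _).mp (hE_zero t ht) n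
      (Finset.mem_range.mpr hn)

/-- For `ω ≠ 0`, these are all the solutions of `y'''' = ω⁴ y` with `y(0) = y'(0) = 0`. -/
noncomputable def clampedBeamMode (ω A B t : ℝ) : ℝ :=
  A * (cosh (ω * t) - cos (ω * t)) + B * (sinh (ω * t) - sin (ω * t))

theorem contDiff_clampedBeamMode (ω A B : ℝ) {n : WithTop ℕ∞} :
    ContDiff ℝ n (clampedBeamMode ω A B) := by
  unfold clampedBeamMode
  fun_prop

theorem iteratedDeriv_clampedBeamMode (ω A B t : ℝ) (n : ℕ) :
    iteratedDeriv n (clampedBeamMode ω A B) t =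
      ω ^ n * (A * (iteratedDeriv n cosh (ω * t) - iteratedDeriv n cos (ω * t)) +
        B * (iteratedDeriv n sinh (ω * t) - iteratedDeriv n sin (ω * t))) := by
  have hf : ContDiff ℝ n fun x => A * (cosh x - cos x) + B * (sinh x - sin x) := by fun_prop
  change iteratedDeriv n (fun t => (fun x => A * (cosh x - cos x) + B * (sinh x - sin x)) (ω * t))
    t = _
  rw [iteratedDeriv_comp_const_mul hf]
  beta_reduce
  rw [iteratedDeriv_fun_add (by fun_prop) (by fun_prop), iteratedDeriv_const_mul_field,
    iteratedDeriv_const_mul_field, iteratedDeriv_fun_sub (by fun_prop) (by fun_prop),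
    iteratedDeriv_fun_sub (by fun_prop) (by fun_prop)]

theorem iteratedDeriv_four_clampedBeamMode (ω A B t : ℝ) :
    iteratedDeriv 4 (clampedBeamMode ω A B) t = ω ^ 4 * clampedBeamMode ω A B t := by
  simp [iteratedDeriv_clampedBeamMode, iteratedDeriv_succ, clampedBeamMode]

theorem eq_zero_of_cosh_sin_system {θ A B : ℝ} (hθ : sin θ ≠ 0)
    (h1 : A * (sinh θ + sin θ) + B * (cosh θ - cos θ) = 0)
    (h2 : A * (cosh θ + cos θ) + B * (sinh θ + sin θ) = 0) : A = 0 ∧ B = 0 := by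
  have hdet : 2 * sinh θ * sin θ ≠ 0 := by
    have : θ ≠ 0 := by rintro rfl; simp at hθ
    simp [this, hθ]
  constructor
  · refine (mul_eq_zero.mp ?_).resolve_right hdet
    linear_combination (sinh θ + sin θ) * h1 - (cosh θ - cos θ) * h2 - A * sin_sq_add_cos_sq θ +
      A * cosh_sq θ
  · refine (mul_eq_zero.mp ?_).resolve_right hdet
    linear_combination (sinh θ + sin θ) * h2 - (cosh θ + cos θ) * h1 + B * cosh_sq θ -
      B * sin_sq_add_cos_sq θ

theorem clampedBeamMode_coeffs_eq_zero {ω T A B : ℝ} (hωT : sin (ω * T) ≠ 0)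
    (h1 : deriv (clampedBeamMode ω A B) T = 0)
    (h2 : iteratedDeriv 2 (clampedBeamMode ω A B) T = 0) : A = 0 ∧ B = 0 := by
  have hω : ω ≠ 0 := by rintro rfl; simp at hωT
  rw [← iteratedDeriv_one] at h1
  simp only [iteratedDeriv_clampedBeamMode, pow_one, iteratedDeriv_succ, iteratedDeriv_zero,
    Real.deriv_cosh, deriv_cos', sub_neg_eq_add, Real.deriv_sinh, Real.deriv_sin, deriv.fun_neg',
    mul_eq_zero, pow_eq_zero_iff two_ne_zero, hω, false_or] at h1 h2
  exact eq_zero_of_cosh_sin_system hωT h1 h2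

theorem eq_zero_of_fourth_order_bvp_of_sin_ne_zero {ω T : ℝ} (hωT : sin (ω * T) ≠ 0)
    {h : ℝ → ℝ} (hsm : ContDiff ℝ 4 h)
    (hode : ∀ t ∈ Icc (0:ℝ) T, iteratedDeriv 4 h t = ω ^ 4 * h t)
    (h0 : h 0 = 0) (h0' : deriv h 0 = 0)
    (hT' : deriv h T = 0) (hT'' : iteratedDeriv 2 h T = 0) :
    ∀ t ∈ Icc (0:ℝ) T, h t = 0 := by
  intro t ht
  have hω : ω ≠ 0 := by rintro rfl; simp at hωT
  set g := clampedBeamMode ω (iteratedDeriv 2 h 0 / (2 * ω ^ 2))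
    (iteratedDeriv 3 h 0 / (2 * ω ^ 3))
  have hsub : ∀ n ≤ 4, ∀ s,
      iteratedDeriv n (h - g) s = iteratedDeriv n h s - iteratedDeriv n g s :=
    fun n hn s => iteratedDeriv_sub (hsm.of_le (by exact_mod_cast hn)).contDiffAt
      (contDiff_clampedBeamMode _ _ _).contDiffAt
  have hode' : ∀ s ∈ Icc 0 T, iteratedDeriv 4 (h - g) s = ω ^ 4 * (h - g) s := fun s hs => by
    rw [hsub 4 le_rfl, hode s hs, iteratedDeriv_four_clampedBeamMode, Pi.sub_apply, mul_sub]
  have hinit : ∀ n < 4, iteratedDeriv n (h - g) 0 = 0 := by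
    intro n hn
    rw [hsub n hn.le]
    interval_cases n <;> simp [g, iteratedDeriv_clampedBeamMode, iteratedDeriv_succ, h0, h0'] <;>
      field_simp <;> ring
  have hzero := iteratedDeriv_eq_zero_of_fourth_order_ivp (w := h - g)
    (hsm.sub (contDiff_clampedBeamMode _ _ _)) hode' hinit
  have hTmem : T ∈ Icc 0 T := ⟨ht.1.trans ht.2, le_rfl⟩
  have hg₁ : deriv g T = 0 := by
    have := hzero T hTmem 1 (by norm_num)
    rwa [hsub 1 (by norm_num), iteratedDeriv_one, iteratedDeriv_one, hT', zero_sub, neg_eq_zero]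
      at this
  have hg₂ : iteratedDeriv 2 g T = 0 := by
    have := hzero T hTmem 2 (by norm_num)
    rwa [hsub 2 (by norm_num), hT'', zero_sub, neg_eq_zero] at this
  obtain ⟨hA, hB⟩ := clampedBeamMode_coeffs_eq_zero hωT hg₁ hg₂
  have := hzero t ht 0 (by norm_num)
  simpa [g, hA, hB, clampedBeamMode] using this

/-- For `T > 0` and `ω = π/(2T)`, the only solution of `h'''' = ω⁴ h` on `[0,T]` with
`h(0) = 0`, `h'(0) = 0`, `h'(T) = 0`, `h''(T) = 0` is the zero function. -/
theorem fourth_order_bvp_unique_zero (T : ℝ) (hT : 0 < T) (h : ℝ → ℝ)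
    (hsm : ContDiff ℝ 4 h)
    (hode : ∀ t ∈ Icc (0:ℝ) T, iteratedDeriv 4 h t = (π/(2*T))^4 * h t)
    (h0 : h 0 = 0) (h0' : deriv h 0 = 0)
    (hT' : deriv h T = 0) (hT'' : iteratedDeriv 2 h T = 0) :
    ∀ t ∈ Icc (0:ℝ) T, h t = 0 := by
  have hωT : π / (2 * T) * T = π / 2 := by field_simp
  exact eq_zero_of_fourth_order_bvp_of_sin_ne_zero (by simp [hωT]) hsm hode h0 h0' hT' hT''
end

section
/- For T > 0 and ω = π/(2T), given arbitrary real values a and b, there exists a unique solution h of h'''' = ω⁴ h on [0,T] with h(0) = 0, h'(0) = 0, h'(T) = a and h''(T) = b. -/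
/-!
Every solution of `h'''' = ω⁴ h` is a combination of `cosh (ω t)`, `sinh (ω t)`, `cos (ω t)` and
`sin (ω t)`, because this family realises every Cauchy datum `(h, h', h'', h''')(0)` and the
equivalent first-order system has unique solutions. The conditions `h 0 = h' 0 = 0` leave
`p (cosh - cos) + q (sinh - sin)`, and for `ω T = π / 2` the conditions at `T` become a linear system
in `(p, q)` with determinant `(sinh (π/2) + 1)² - cosh² (π/2) = 2 sinh (π/2) ≠ 0`.
-/

open Real Set

section Jet

variable {E : Type*} [NormedAddCommGroup E] [NormedSpace ℝ E]

noncomputable def jet (n : ℕ) (f : ℝ → E) (t : ℝ) : Fin n → E := fun i => iteratedDeriv i f t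

/-- `f⁽ⁿ⁾ = L (jet n f)` is the first-order system `(jet n f)' = companionMap n L (jet n f)`. -/
def companionMap (n : ℕ) (L : (Fin n → E) →L[ℝ] E) : (Fin n → E) →L[ℝ] (Fin n → E) :=
  ContinuousLinearMap.pi fun i =>
    if h : (i : ℕ) + 1 < n then ContinuousLinearMap.proj ⟨i + 1, h⟩ else L

theorem hasDerivAt_jet {n : ℕ} {f : ℝ → E} (hf : ContDiff ℝ n f) (t : ℝ) :
    HasDerivAt (jet n f) (fun i : Fin n => iteratedDeriv ((i : ℕ) + 1) f t) t := by
  refine hasDerivAt_pi.2 fun i => ?_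
  rw [iteratedDeriv_succ]
  exact ((hf.differentiable_iteratedDeriv i (by exact_mod_cast i.isLt)) t).hasDerivAt

theorem companionMap_jet {n : ℕ} {L : (Fin n → E) →L[ℝ] E} {f : ℝ → E} {t : ℝ}
    (hf : iteratedDeriv n f t = L (jet n f t)) :
    companionMap n L (jet n f t) = fun i : Fin n => iteratedDeriv ((i : ℕ) + 1) f t := by
  funext i
  by_cases h : (i : ℕ) + 1 < n
  · simp [companionMap, h, jet]
  · have hi : (i : ℕ) + 1 = n := by omega
    simp [companionMap, hi, hf]

theorem jet_eqOn_of_jet_eq {n : ℕ} {L : (Fin n → E) →L[ℝ] E} {T : ℝ} {f g : ℝ → E}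
    (hf : ContDiff ℝ n f) (hg : ContDiff ℝ n g)
    (hfL : ∀ t ∈ Icc 0 T, iteratedDeriv n f t = L (jet n f t))
    (hgL : ∀ t ∈ Icc 0 T, iteratedDeriv n g t = L (jet n g t))
    (h0 : jet n f 0 = jet n g 0) :
    EqOn (jet n f) (jet n g) (Icc 0 T) := by
  have hsol : ∀ u : ℝ → E, ContDiff ℝ n u → (∀ t ∈ Icc 0 T, iteratedDeriv n u t = L (jet n u t)) →
      ∀ t ∈ Ico 0 T, HasDerivWithinAt (jet n u) (companionMap n L (jet n u t)) (Ici t) t :=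
    fun u hu huL t ht => by
      rw [companionMap_jet (huL t (Ico_subset_Icc_self ht))]
      exact (hasDerivAt_jet hu t).hasDerivWithinAt
  exact ODE_solution_unique_of_mem_Icc_right
    (fun _ _ => (companionMap n L).lipschitz.lipschitzOnWith (s := univ))
    (fun t _ => (hasDerivAt_jet hf t).continuousAt.continuousWithinAt) (hsol f hf hfL)
    (fun _ _ => trivial)
    (fun t _ => (hasDerivAt_jet hg t).continuousAt.continuousWithinAt) (hsol g hg hgL)
    (fun _ _ => trivial) h0

end Jet

noncomputable def hypTrigComb (ω p q r s : ℝ) (t : ℝ) : ℝ :=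
  p * cosh (ω * t) + q * sinh (ω * t) + r * cos (ω * t) + s * sin (ω * t)

section HypTrigComb

variable (ω p q r s : ℝ)

theorem hasDerivAt_hypTrigComb (t : ℝ) :
    HasDerivAt (hypTrigComb ω p q r s) (hypTrigComb ω (ω * q) (ω * p) (ω * s) (-(ω * r)) t) t := by
  have hlin : HasDerivAt (fun x : ℝ => ω * x) ω t := by
    simpa using (hasDerivAt_id t).const_mul ω
  exact ((((hlin.cosh.const_mul p).add (hlin.sinh.const_mul q)).add
    (hlin.cos.const_mul r)).add (hlin.sin.const_mul s)).congr_deriv (by simp only [hypTrigComb]; ring)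

theorem deriv_hypTrigComb :
    deriv (hypTrigComb ω p q r s) = hypTrigComb ω (ω * q) (ω * p) (ω * s) (-(ω * r)) :=
  funext fun t => (hasDerivAt_hypTrigComb ω p q r s t).deriv

theorem contDiff_hypTrigComb {n : WithTop ℕ∞} : ContDiff ℝ n (hypTrigComb ω p q r s) := by
  have hlin : ContDiff ℝ n (fun t : ℝ => ω * t) := contDiff_const.mul contDiff_id
  exact (((contDiff_const.mul hlin.cosh).add (contDiff_const.mul hlin.sinh)).add
    (contDiff_const.mul hlin.cos)).add (contDiff_const.mul hlin.sin)

theorem iteratedDeriv_two_hypTrigComb :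
    iteratedDeriv 2 (hypTrigComb ω p q r s) =
      hypTrigComb ω (ω ^ 2 * p) (ω ^ 2 * q) (-(ω ^ 2 * r)) (-(ω ^ 2 * s)) := by
  rw [iteratedDeriv_succ, iteratedDeriv_one, deriv_hypTrigComb, deriv_hypTrigComb]
  congr 1 <;> ring

theorem iteratedDeriv_three_hypTrigComb :
    iteratedDeriv 3 (hypTrigComb ω p q r s) =
      hypTrigComb ω (ω ^ 3 * q) (ω ^ 3 * p) (-(ω ^ 3 * s)) (ω ^ 3 * r) := by
  rw [iteratedDeriv_succ, iteratedDeriv_two_hypTrigComb, deriv_hypTrigComb]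
  congr 1 <;> ring

theorem iteratedDeriv_four_hypTrigComb (t : ℝ) :
    iteratedDeriv 4 (hypTrigComb ω p q r s) t = ω ^ 4 * hypTrigComb ω p q r s t := by
  rw [iteratedDeriv_succ, iteratedDeriv_three_hypTrigComb, deriv_hypTrigComb]
  simp only [hypTrigComb]
  ring

theorem hypTrigComb_zero : hypTrigComb ω p q r s 0 = p + r := by
  simp [hypTrigComb]

theorem hypTrigComb_of_mul_eq_pi_div_two {T : ℝ} (hωT : ω * T = π / 2) :
    hypTrigComb ω p q r s T = p * cosh (π / 2) + q * sinh (π / 2) + s := by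
  simp [hypTrigComb, hωT]

end HypTrigComb

theorem existsUnique_sinh_cosh_system {x : ℝ} (hx : x ≠ 0) (u v : ℝ) :
    ∃! pq : ℝ × ℝ, (sinh x + 1) * pq.1 + cosh x * pq.2 = u ∧
      cosh x * pq.1 + (sinh x + 1) * pq.2 = v := by
  have hS : sinh x ≠ 0 := sinh_ne_zero.2 hx
  have hC : cosh x ^ 2 = sinh x ^ 2 + 1 := cosh_sq x
  refine ⟨(((sinh x + 1) * u - cosh x * v) / (2 * sinh x),
    ((sinh x + 1) * v - cosh x * u) / (2 * sinh x)), ⟨?_, ?_⟩, ?_⟩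
  · field_simp
    linear_combination (-u) * hC
  · field_simp
    linear_combination (-v) * hC
  · rintro ⟨p, q⟩ ⟨hu, hv⟩
    dsimp only at hu hv
    rw [Prod.mk.injEq]
    constructor <;> field_simp
    · linear_combination (sinh x + 1) * hu - cosh x * hv + p * hC
    · linear_combination (sinh x + 1) * hv - cosh x * hu + q * hC

noncomputable def clampedSol (ω p q : ℝ) : ℝ → ℝ := hypTrigComb ω p q (-p) (-q)

section ClampedSol

variable {ω : ℝ} (p q : ℝ)

theorem clampedSol_zero : clampedSol ω p q 0 = 0 := by
  simp [clampedSol, hypTrigComb_zero]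

theorem deriv_clampedSol_zero : deriv (clampedSol ω p q) 0 = 0 := by
  simp [clampedSol, deriv_hypTrigComb, hypTrigComb_zero]

theorem jet_clampedSol_zero :
    jet 4 (clampedSol ω p q) 0 = ![0, 0, 2 * ω ^ 2 * p, 2 * ω ^ 3 * q] := by
  funext i
  fin_cases i <;>
    simp [jet, clampedSol, deriv_hypTrigComb, iteratedDeriv_two_hypTrigComb,
      iteratedDeriv_three_hypTrigComb, hypTrigComb_zero] <;> ring

theorem clampedSol_boundary_iff {T a b : ℝ} (hω : ω ≠ 0) (hωT : ω * T = π / 2) :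
    (deriv (clampedSol ω p q) T = a ∧ iteratedDeriv 2 (clampedSol ω p q) T = b) ↔
      ((sinh (π / 2) + 1) * p + cosh (π / 2) * q = a / ω ∧
        cosh (π / 2) * p + (sinh (π / 2) + 1) * q = b / ω ^ 2) := by
  rw [clampedSol, deriv_hypTrigComb, iteratedDeriv_two_hypTrigComb,
    hypTrigComb_of_mul_eq_pi_div_two _ _ _ _ _ hωT, hypTrigComb_of_mul_eq_pi_div_two _ _ _ _ _ hωT,
    eq_div_iff hω, eq_div_iff (pow_ne_zero 2 hω)]
  refine and_congr ⟨fun h => ?_, fun h => ?_⟩ ⟨fun h => ?_, fun h => ?_⟩ <;> linear_combination h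

end ClampedSol

theorem exists_jet_eqOn_clampedSol {ω T : ℝ} (hω : ω ≠ 0) {g : ℝ → ℝ} (hg : ContDiff ℝ 4 g)
    (hgODE : ∀ t ∈ Icc 0 T, iteratedDeriv 4 g t = ω ^ 4 * g t) (hg0 : g 0 = 0)
    (hg1 : deriv g 0 = 0) :
    ∃ p q, EqOn (jet 4 g) (jet 4 (clampedSol ω p q)) (Icc 0 T) := by
  refine ⟨iteratedDeriv 2 g 0 / (2 * ω ^ 2), iteratedDeriv 3 g 0 / (2 * ω ^ 3), ?_⟩
  set L : (Fin 4 → ℝ) →L[ℝ] ℝ := ω ^ 4 • ContinuousLinearMap.proj 0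
  have hL : ∀ f : ℝ → ℝ, ∀ t, iteratedDeriv 4 f t = ω ^ 4 * f t →
      iteratedDeriv 4 f t = L (jet 4 f t) := by
    intro f t hf
    simp [L, hf, jet]
  refine jet_eqOn_of_jet_eq (L := L) hg (contDiff_hypTrigComb ..)
    (fun t ht => hL g t (hgODE t ht))
    (fun t _ => hL _ t (iteratedDeriv_four_hypTrigComb ..)) ?_
  rw [jet_clampedSol_zero]
  funext i
  fin_cases i <;> simp [jet, hg0, hg1] <;> field_simp

/-- For `T > 0`, `ω = π/(2T)` and arbitrary `a b : ℝ`, there is a unique solution of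
`h'''' = ω⁴ h` on `[0,T]` with `h(0) = 0`, `h'(0) = 0`, `h'(T) = a`, `h''(T) = b`. -/
theorem fourth_order_bvp_exists_unique (T a b : ℝ) (hT : 0 < T) :
    ∃ h : ℝ → ℝ,
      (ContDiff ℝ 4 h ∧
        (∀ t ∈ Icc (0:ℝ) T, iteratedDeriv 4 h t = (π/(2*T))^4 * h t) ∧
        h 0 = 0 ∧ deriv h 0 = 0 ∧ deriv h T = a ∧ iteratedDeriv 2 h T = b) ∧
      ∀ g : ℝ → ℝ,
        (ContDiff ℝ 4 g ∧
          (∀ t ∈ Icc (0:ℝ) T, iteratedDeriv 4 g t = (π/(2*T))^4 * g t) ∧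
          g 0 = 0 ∧ deriv g 0 = 0 ∧ deriv g T = a ∧ iteratedDeriv 2 g T = b) →
        ∀ t ∈ Icc (0:ℝ) T, g t = h t := by
  set ω := π / (2 * T)
  have hω : ω ≠ 0 := by positivity
  have hωT : ω * T = π / 2 := by simp only [ω]; field_simp
  obtain ⟨⟨α, β⟩, hαβ, huniq⟩ :=
    existsUnique_sinh_cosh_system (x := π / 2) (by positivity) (a / ω) (b / ω ^ 2)
  obtain ⟨hαT, hβT⟩ := (clampedSol_boundary_iff α β hω hωT).2 hαβ
  refine ⟨clampedSol ω α β, ⟨contDiff_hypTrigComb .., fun t _ => iteratedDeriv_four_hypTrigComb ..,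
    clampedSol_zero α β, deriv_clampedSol_zero α β, hαT, hβT⟩, ?_⟩
  rintro g ⟨hg, hgODE, hg0, hg1, hgT1, hgT2⟩ t ht
  obtain ⟨p, q, hjet⟩ := exists_jet_eqOn_clampedSol hω hg hgODE hg0 hg1
  have hjetT := hjet (right_mem_Icc.2 hT.le)
  have hpq : (p, q) = (α, β) := by
    refine huniq (p, q) ((clampedSol_boundary_iff p q hω hωT).1 ⟨?_, ?_⟩)
    · simpa [jet, hgT1] using (congrFun hjetT 1).symm
    · simpa [jet, hgT2] using (congrFun hjetT 2).symm
  obtain ⟨rfl, rfl⟩ := Prod.mk.inj hpq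
  simpa [jet] using congrFun (hjet ht) 0
end

section
/- Let f : ℝ × ℝᴺ × K → ℝᴺ be continuous, Lipschitz in the state variable with uniform constant L₀, and uniformly bounded by M₀. Let u, u' : [0,T] → K be measurable control curves and x, x' : [0,T] → ℝᴺ absolutely continuous solutions of ẋ(t) = f(t, x(t), u(t)) and ẋ'(t) = f(t, x'(t), u'(t)) with initial data x(0), x'(0). Then sup_{t∈[0,T]} |x(t) − x'(t)| ≤ e^{L₀T} ( |x(0) − x'(0)| + 2M₀ · measure{ t ∈ [0,T] : u(t) ≠ u'(t) } ). -/
/-!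
On the set where the controls agree, the Lipschitz bound gives
`‖ẋ - ẋ'‖ ≤ L₀ ‖x - x'‖`; elsewhere the uniform bound gives `‖ẋ - ẋ'‖ ≤ 2 M₀`.
Integrating, `g = ‖x - x'‖` satisfies `g t ≤ A + L₀ ∫₀ᵗ g` with
`A = ‖x 0 - x' 0‖ + 2 M₀ · meas{u ≠ u'}`, and Grönwall's inequality gives `g t ≤ A e^{L₀ t}`.
-/

open Real Set MeasureTheory

theorem add_mul_gronwallBound_zero (K ε x : ℝ) :
    ε + K * gronwallBound 0 K ε x = ε * exp (K * x) := by
  rcases eq_or_ne K 0 with rfl | hK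
  · simp
  · rw [gronwallBound_of_K_ne_0 hK]
    field_simp
    ring

/-- Grönwall's inequality in integral form. -/
theorem le_mul_exp_of_le_add_mul_integral {g : ℝ → ℝ} {A L T : ℝ} (hg : Continuous g)
    (hL : 0 ≤ L) (h : ∀ t ∈ Icc 0 T, g t ≤ A + L * ∫ s in (0 : ℝ)..t, g s) :
    ∀ t ∈ Icc 0 T, g t ≤ A * exp (L * t) := by
  set G : ℝ → ℝ := fun t => ∫ s in (0 : ℝ)..t, g s
  have hG : ∀ t, HasDerivAt G (g t) t := fun t => (hg.integral_hasStrictDerivAt 0 t).hasDerivAt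
  have hG_le : ∀ t ∈ Icc 0 T, G t ≤ gronwallBound 0 L A (t - 0) :=
    le_gronwallBound_of_liminf_deriv_right_le
      (fun t _ => (hG t).continuousAt.continuousWithinAt)
      (fun t _ _ hr => (hG t).hasDerivWithinAt.liminf_right_slope_le hr) (by simp [G])
      (fun t ht => (h t (Ico_subset_Icc_self ht)).trans_eq (add_comm _ _))
  intro t ht
  calc g t ≤ A + L * G t := h t ht
    _ ≤ A + L * gronwallBound 0 L A t := by gcongr; simpa using hG_le t ht
    _ = A * exp (L * t) := add_mul_gronwallBound_zero L A t

section IntegralEquation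

variable {E : Type*} [NormedAddCommGroup E] [NormedSpace ℝ E]

theorem norm_sub_le_of_eq_add_integral {x x' F F' : ℝ → E} {t : ℝ} (ht : 0 ≤ t)
    (hF : IntervalIntegrable F volume 0 t) (hF' : IntervalIntegrable F' volume 0 t)
    (hx : x t = x 0 + ∫ s in (0 : ℝ)..t, F s) (hx' : x' t = x' 0 + ∫ s in (0 : ℝ)..t, F' s) :
    ‖x t - x' t‖ ≤ ‖x 0 - x' 0‖ + ∫ s in (0 : ℝ)..t, ‖F s - F' s‖ := by
  have hdiff : x t - x' t = (x 0 - x' 0) + ∫ s in (0 : ℝ)..t, (F s - F' s) := by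
    rw [hx, hx', intervalIntegral.integral_sub hF hF']
    abel
  rw [hdiff]
  exact (norm_add_le _ _).trans
    (add_le_add_right (intervalIntegral.norm_integral_le_integral_norm ht) _)

theorem norm_sub_le_add_mul_integral_of_eq_add_integral {x x' F F' : ℝ → E} {φ : ℝ → ℝ}
    {L t : ℝ} (ht : 0 ≤ t) (hx : Continuous x) (hx' : Continuous x')
    (hF : IntervalIntegrable F volume 0 t) (hF' : IntervalIntegrable F' volume 0 t)
    (hφ : IntervalIntegrable φ volume 0 t)
    (hxt : x t = x 0 + ∫ s in (0 : ℝ)..t, F s) (hx't : x' t = x' 0 + ∫ s in (0 : ℝ)..t, F' s)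
    (hFF' : ∀ s, ‖F s - F' s‖ ≤ L * ‖x s - x' s‖ + φ s) :
    ‖x t - x' t‖ ≤
      ‖x 0 - x' 0‖ + L * (∫ s in (0 : ℝ)..t, ‖x s - x' s‖) + ∫ s in (0 : ℝ)..t, φ s := by
  have hg : IntervalIntegrable (fun s => L * ‖x s - x' s‖) volume 0 t :=
    ((hx.sub hx').norm.intervalIntegrable 0 t).const_mul L
  calc ‖x t - x' t‖ ≤ ‖x 0 - x' 0‖ + ∫ s in (0 : ℝ)..t, ‖F s - F' s‖ :=
        norm_sub_le_of_eq_add_integral ht hF hF' hxt hx't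
    _ ≤ ‖x 0 - x' 0‖ + ∫ s in (0 : ℝ)..t, (L * ‖x s - x' s‖ + φ s) := by
        gcongr
        exact intervalIntegral.integral_mono_on ht (hF.sub hF').norm (hg.add hφ)
          fun s _ => hFF' s
    _ = _ := by
        rw [intervalIntegral.integral_add hg hφ, intervalIntegral.integral_const_mul, add_assoc]

end IntegralEquation

theorem norm_sub_le_mul_norm_sub_add_indicator {α κ E F : Type*} [SeminormedAddCommGroup E]
    [SeminormedAddCommGroup F] {f : α → E → κ → F} {K : Set κ} {L : NNReal} {M : ℝ}
    (hlip : ∀ t v, v ∈ K → LipschitzWith L (fun x => f t x v))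
    (hbd : ∀ t x v, v ∈ K → ‖f t x v‖ ≤ M) {u u' : α → κ} (huK : ∀ t, u t ∈ K)
    (hu'K : ∀ t, u' t ∈ K) (x x' : α → E) (s : α) :
    ‖f s (x s) (u s) - f s (x' s) (u' s)‖ ≤
      L * ‖x s - x' s‖ + {s | u s ≠ u' s}.indicator (fun _ => 2 * M) s := by
  by_cases h : u s = u' s
  · rw [indicator_of_notMem (not_not_intro h), add_zero, h, ← dist_eq_norm, ← dist_eq_norm]
    exact (hlip s (u' s) (hu'K s)).dist_le_mul _ _
  · rw [indicator_of_mem h]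
    calc ‖f s (x s) (u s) - f s (x' s) (u' s)‖
        ≤ ‖f s (x s) (u s)‖ + ‖f s (x' s) (u' s)‖ := norm_sub_le _ _
      _ ≤ M + M := add_le_add (hbd _ _ _ (huK s)) (hbd _ _ _ (hu'K s))
      _ ≤ L * ‖x s - x' s‖ + 2 * M := by
        linarith [mul_nonneg L.coe_nonneg (norm_nonneg (x s - x' s))]

theorem intervalIntegral_indicator_const_le {D : Set ℝ} (hD : MeasurableSet D) {c t T : ℝ}
    (hc : 0 ≤ c) (ht : t ∈ Icc 0 T) :
    ∫ s in (0 : ℝ)..t, D.indicator (fun _ => c) s ≤ c * (volume (Icc 0 T ∩ D)).toReal := by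
  rw [intervalIntegral.integral_of_le ht.1, setIntegral_indicator hD, setIntegral_const,
    smul_eq_mul, mul_comm, measureReal_def]
  gcongr
  · exact (measure_mono inter_subset_left).trans_lt measure_Icc_lt_top |>.ne
  · exact Ioc_subset_Icc_self.trans (Icc_subset_Icc_right ht.2)

theorem controlled_ode_continuity_estimate_general (N M : ℕ) (T : ℝ)
    (K : Set (Fin M → ℝ))
    (f : ℝ → EuclideanSpace ℝ (Fin N) → (Fin M → ℝ) → EuclideanSpace ℝ (Fin N))
    (L₀ : NNReal) (M₀ : ℝ)
    (hcont : Continuous fun q : ℝ × EuclideanSpace ℝ (Fin N) × (Fin M → ℝ) =>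
      f q.1 q.2.1 q.2.2)
    (hlip : ∀ t u, u ∈ K → LipschitzWith L₀ (fun x => f t x u))
    (hbd : ∀ t x u, u ∈ K → ‖f t x u‖ ≤ M₀)
    (u u' : ℝ → Fin M → ℝ) (hu : Measurable u) (hu' : Measurable u')
    (huK : ∀ t, u t ∈ K) (hu'K : ∀ t, u' t ∈ K)
    (x x' : ℝ → EuclideanSpace ℝ (Fin N)) (hx : Continuous x) (hx' : Continuous x')
    (hxeq : ∀ t ∈ Icc (0:ℝ) T, x t = x 0 + ∫ s in (0:ℝ)..t, f s (x s) (u s))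
    (hx'eq : ∀ t ∈ Icc (0:ℝ) T, x' t = x' 0 + ∫ s in (0:ℝ)..t, f s (x' s) (u' s)) :
    ∀ t ∈ Icc (0:ℝ) T,
      ‖x t - x' t‖ ≤ Real.exp ((L₀ : ℝ) * T) *
        (‖x 0 - x' 0‖ +
          2 * M₀ * (volume {t : ℝ | t ∈ Icc (0:ℝ) T ∧ u t ≠ u' t}).toReal) := by
  have hM₀ : 0 ≤ M₀ := (norm_nonneg _).trans (hbd 0 (x 0) (u 0) (huK 0))
  have hD : MeasurableSet {s | u s ≠ u' s} := (measurableSet_eq_fun hu hu').compl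
  have hrhs : ∀ (y : ℝ → EuclideanSpace ℝ (Fin N)) (v : ℝ → Fin M → ℝ), Continuous y →
      Measurable v → (∀ s, v s ∈ K) →
      ∀ t, IntervalIntegrable (fun s => f s (y s) (v s)) volume 0 t := fun y v hy hv hvK _ =>
    have hmeas := hcont.measurable.comp (measurable_id.prodMk (hy.measurable.prodMk hv))
    intervalIntegrable_const.mono_fun' hmeas.aestronglyMeasurable.restrict
      (ae_of_all _ fun s => hbd s (y s) (v s) (hvK s))
  have hintegral : ∀ t ∈ Icc (0:ℝ) T, ‖x t - x' t‖ ≤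
      (‖x 0 - x' 0‖ + 2 * M₀ * (volume {t : ℝ | t ∈ Icc (0:ℝ) T ∧ u t ≠ u' t}).toReal) +
        L₀ * ∫ s in (0:ℝ)..t, ‖x s - x' s‖ := fun t ht => by
    have hdiff := norm_sub_le_add_mul_integral_of_eq_add_integral ht.1 hx hx'
      (hrhs x u hx hu huK t) (hrhs x' u' hx' hu' hu'K t)
      ⟨intervalIntegrable_const.1.indicator hD, intervalIntegrable_const.2.indicator hD⟩
      (hxeq t ht) (hx'eq t ht)
      (norm_sub_le_mul_norm_sub_add_indicator hlip hbd huK hu'K x x')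
    have hindicator : ∫ s in (0:ℝ)..t, {s | u s ≠ u' s}.indicator (fun _ => 2 * M₀) s ≤
        2 * M₀ * (volume {t : ℝ | t ∈ Icc (0:ℝ) T ∧ u t ≠ u' t}).toReal :=
      intervalIntegral_indicator_const_le hD (by positivity) ht
    linarith
  intro t ht
  calc ‖x t - x' t‖ ≤ _ * exp (L₀ * t) :=
        le_mul_exp_of_le_add_mul_integral (hx.sub hx').norm L₀.coe_nonneg hintegral t ht
    _ ≤ _ := by
        rw [mul_comm]
        gcongr
        exact ht.2

/-- Gronwall-type continuity estimate (Lemma 7.2): for a controlled ODE with uniformly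
bounded, uniformly Lipschitz right-hand side, two solutions differ at most by
`e^{L₀T} (|x(0) - x'(0)| + 2 M₀ · meas{t : u t ≠ u' t})`. -/
theorem controlled_ode_continuity_estimate (N M : ℕ) (T : ℝ) (hT : 0 < T)
    (K : Set (Fin M → ℝ)) (hK : IsCompact K)
    (f : ℝ → EuclideanSpace ℝ (Fin N) → (Fin M → ℝ) → EuclideanSpace ℝ (Fin N))
    (L₀ : NNReal) (M₀ : ℝ)
    (hcont : Continuous fun q : ℝ × EuclideanSpace ℝ (Fin N) × (Fin M → ℝ) =>
      f q.1 q.2.1 q.2.2)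
    (hlip : ∀ t u, u ∈ K → LipschitzWith L₀ (fun x => f t x u))
    (hbd : ∀ t x u, u ∈ K → ‖f t x u‖ ≤ M₀)
    (u u' : ℝ → Fin M → ℝ) (hu : Measurable u) (hu' : Measurable u')
    (huK : ∀ t, u t ∈ K) (hu'K : ∀ t, u' t ∈ K)
    (x x' : ℝ → EuclideanSpace ℝ (Fin N)) (hx : Continuous x) (hx' : Continuous x')
    (hxeq : ∀ t ∈ Icc (0:ℝ) T, x t = x 0 + ∫ s in (0:ℝ)..t, f s (x s) (u s))
    (hx'eq : ∀ t ∈ Icc (0:ℝ) T, x' t = x' 0 + ∫ s in (0:ℝ)..t, f s (x' s) (u' s)) :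
    ∀ t ∈ Icc (0:ℝ) T,
      ‖x t - x' t‖ ≤ Real.exp ((L₀ : ℝ) * T) *
        (‖x 0 - x' 0‖ +
          2 * M₀ * (volume {t : ℝ | t ∈ Icc (0:ℝ) T ∧ u t ≠ u' t}).toReal) :=
  controlled_ode_continuity_estimate_general N M T K f L₀ M₀ hcont hlip hbd u u' hu hu' huK hu'K x
    x' hx hx' hxeq hx'eq
end
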